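/- arXiv:2203.11528 — 8 statements merged into one kernel-verified Lean document; each statement's English description precedes it below -/
import Mathlib

section
/- Let P ∈ 𝒫 with coupling κ, let ν be the first marginal of κ, and let ν_g := g_*ν be the law of the causal feature. Then for every measurable map v : W → Z, the risk of the model v ∘ g satisfies E_P[L(v(g(X)), Y)] = ∫⁻_W ∫⁻_U L(v(w), m(w, u)) dF(u) dν_g(w). In particular, the risk under P of any model that factors measurably through g depends on P only through ν_g. -/
open MeasureTheory ENNReal

variable {𝒳 W U 𝒴 Z : Type*} [MeasurableSpace 𝒳] [MeasurableSpace W]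
  [MeasurableSpace U] [MeasurableSpace 𝒴] [MeasurableSpace Z]

/-- `κ` is a coupling (the joint law of `(X, η)`) witnessing that `P` belongs to the
class `𝒫`: `κ` is a probability measure, the pushforward of `κ` under
`(x, u) ↦ (g x, u)` equals `(g_*ν) ⊗ F` where `ν` is the first marginal of `κ`
(encoding `η ∼ F` and `η ⟂ g(X)`), and `P` is the pushforward of `κ` under
`(x, u) ↦ (x, m (g x, u))` (encoding `Y = m(g(X), η)`). -/
def IsCouplingFor (g : 𝒳 → W) (m : W × U → 𝒴) (F : Measure U)
    (κ : Measure (𝒳 × U)) (P : Measure (𝒳 × 𝒴)) : Prop :=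
  IsProbabilityMeasure κ ∧
    κ.map (fun p : 𝒳 × U => (g p.1, p.2)) = ((κ.map Prod.fst).map g).prod F ∧
    P = κ.map (fun p : 𝒳 × U => (p.1, m (g p.1, p.2)))

/-- The class `𝒫` of distributions generated by the structural causal model. -/
def MemP (g : 𝒳 → W) (m : W × U → 𝒴) (F : Measure U) (P : Measure (𝒳 × 𝒴)) : Prop :=
  ∃ κ : Measure (𝒳 × U), IsCouplingFor g m F κ P

/-- The risk `E_P[L(h(X), Y)]` of a model `h` under the distribution `P`. -/
noncomputable def risk (L : Z × 𝒴 → ℝ≥0∞) (h : 𝒳 → Z) (P : Measure (𝒳 × 𝒴)) : ℝ≥0∞ :=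
  ∫⁻ p, L (h p.1, p.2) ∂P

/-- `φ : W → Z` is a pointwise conditional-risk minimizer: for every `w` and every `z`,
`∫⁻ L(φ w, m (w, u)) dF(u) ≤ ∫⁻ L(z, m (w, u)) dF(u)`. -/
def IsPointwiseCondRiskMin (L : Z × 𝒴 → ℝ≥0∞) (m : W × U → 𝒴) (F : Measure U)
    (φ : W → Z) : Prop :=
  ∀ (w : W) (z : Z), ∫⁻ u, L (φ w, m (w, u)) ∂F ≤ ∫⁻ u, L (z, m (w, u)) ∂F

/-- A family `I` of transformations `T : X → X` is a causal essential set for `h` if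
`h ∘ T = h` for every `T ∈ I`, and for all `x₁, x₂` with `h x₁ = h x₂` there are finitely
many `T₁, …, T_K ∈ I` such that `(T₁ ∘ ⋯ ∘ T_K) x₁ = x₂`. -/
def IsCausalEssentialSet {X V : Type*} (h : X → V) (I : Set (X → X)) : Prop :=
  (∀ T ∈ I, h ∘ T = h) ∧
    ∀ x₁ x₂ : X, h x₁ = h x₂ →
      ∃ l : List (X → X), (∀ T ∈ l, T ∈ I) ∧ l.foldr (· ∘ ·) id x₁ = x₂

/-- For `P ∈ 𝒫` with coupling `κ`, first marginal `ν` and causal-feature law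
`ν_g = g_*ν`, the risk of any measurable model `v ∘ g` factoring through `g` equals
`∫⁻_W ∫⁻_U L(v w, m (w, u)) dF dν_g`; in particular this risk depends on `P` only
through `ν_g`. -/
theorem stmt_5 (g : 𝒳 → W) (hg : Measurable g) (m : W × U → 𝒴) (hm : Measurable m)
    (F : Measure U) [IsProbabilityMeasure F] (L : Z × 𝒴 → ℝ≥0∞) (hL : Measurable L)
    (P : Measure (𝒳 × 𝒴)) (κ : Measure (𝒳 × U)) (hκ : IsCouplingFor g m F κ P)
    (v : W → Z) (hv : Measurable v) :
    risk L (v ∘ g) P = ∫⁻ w, ∫⁻ u, L (v w, m (w, u)) ∂F ∂((κ.map Prod.fst).map g) ∧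
      ∀ (P' : Measure (𝒳 × 𝒴)) (κ' : Measure (𝒳 × U)), IsCouplingFor g m F κ' P' →
        (κ'.map Prod.fst).map g = (κ.map Prod.fst).map g →
        risk L (v ∘ g) P' = risk L (v ∘ g) P := by
  have key : ∀ (P' : Measure (𝒳 × 𝒴)) (κ' : Measure (𝒳 × U)), IsCouplingFor g m F κ' P' →
      risk L (v ∘ g) P' = ∫⁻ w, ∫⁻ u, L (v w, m (w, u)) ∂F ∂((κ'.map Prod.fst).map g) := by
    rintro P' κ' ⟨hκp, hpush, rfl⟩
    have hmeas1 : Measurable (fun p : 𝒳 × U => (p.1, m (g p.1, p.2))) :=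
      measurable_fst.prodMk (hm.comp ((hg.comp measurable_fst).prodMk measurable_snd))
    have hmeas2 : Measurable (fun p : 𝒳 × U => (g p.1, p.2)) :=
      (hg.comp measurable_fst).prodMk measurable_snd
    have hℓ : Measurable (fun q : W × U => L (v q.1, m (q.1, q.2))) :=
      hL.comp ((hv.comp measurable_fst).prodMk
        (hm.comp (measurable_fst.prodMk measurable_snd)))
    have hfm : Measurable (fun p : 𝒳 × 𝒴 => L ((v ∘ g) p.1, p.2)) :=
      hL.comp ((hv.comp (hg.comp measurable_fst)).prodMk measurable_snd)
    rw [risk, lintegral_map hfm hmeas1]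
    calc ∫⁻ p : 𝒳 × U, L ((v ∘ g) p.1, m (g p.1, p.2)) ∂κ'
        = ∫⁻ q, L (v q.1, m (q.1, q.2)) ∂(κ'.map (fun p : 𝒳 × U => (g p.1, p.2))) := by
          rw [lintegral_map hℓ hmeas2]; rfl
      _ = ∫⁻ w, ∫⁻ u, L (v w, m (w, u)) ∂F ∂((κ'.map Prod.fst).map g) := by
          rw [hpush, lintegral_prod _ hℓ.aemeasurable]
  refine ⟨key P κ hκ, fun P' κ' h' hg' => ?_⟩
  rw [key P' κ' h', key P κ hκ, hg']
end

section
/- Let φ : W → Z be a measurable pointwise conditional-risk minimizer and h_s := φ ∘ g. Then for every P ∈ 𝒫 and every measurable model h : 𝒳 → Z, there exists Q ∈ 𝒫 such that E_Q[L(h(X), Y)] ≥ E_P[L(h_s(X), Y)]. -/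
open MeasureTheory ENNReal

variable {𝒳 W U 𝒴 Z : Type*} [MeasurableSpace 𝒳] [MeasurableSpace W]
  [MeasurableSpace U] [MeasurableSpace 𝒴] [MeasurableSpace Z]

/-- If `φ` is a measurable pointwise conditional-risk minimizer and `h_s = φ ∘ g`, then
for every `P ∈ 𝒫` and every measurable model `h` there exists `Q ∈ 𝒫` with
`E_Q[L(h(X), Y)] ≥ E_P[L(h_s(X), Y)]`. -/
theorem stmt_6 (g : 𝒳 → W) (hg : Measurable g) (m : W × U → 𝒴) (hm : Measurable m)
    (F : Measure U) [IsProbabilityMeasure F] (L : Z × 𝒴 → ℝ≥0∞) (hL : Measurable L)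
    (φ : W → Z) (hφ : Measurable φ) (hmin : IsPointwiseCondRiskMin L m F φ)
    (P : Measure (𝒳 × 𝒴)) (hP : MemP g m F P)
    (h : 𝒳 → Z) (hh : Measurable h) :
    ∃ Q : Measure (𝒳 × 𝒴), MemP g m F Q ∧ risk L (φ ∘ g) P ≤ risk L h Q := by
  obtain ⟨κ, hκprob, hκg, hκP⟩ := hP
  set ν : Measure 𝒳 := κ.map Prod.fst with hν
  haveI : IsProbabilityMeasure ν := Measure.isProbabilityMeasure_map measurable_fst.aemeasurable
  refine ⟨(ν.prod F).map (fun p : 𝒳 × U => (p.1, m (g p.1, p.2))), ⟨ν.prod F, ?_, ?_, rfl⟩, ?_⟩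
  · infer_instance
  · have h1 : (ν.prod F).map Prod.fst = ν := by
      rw [Measure.map_fst_prod, measure_univ, one_smul]
    rw [h1]
    have : (fun p : 𝒳 × U => (g p.1, p.2)) = Prod.map g id := rfl
    rw [this, ← Measure.map_prod_map _ _ hg measurable_id, Measure.map_id]
  · -- risk inequality
    have hcomp : Measurable (fun p : 𝒳 × U => (p.1, m (g p.1, p.2))) :=
      measurable_fst.prodMk (hm.comp ((hg.comp measurable_fst).prodMk measurable_snd))
    have hLh : Measurable (fun p : 𝒳 × 𝒴 => L (h p.1, p.2)) :=
      hL.comp ((hh.comp measurable_fst).prodMk measurable_snd)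
    have hLφ : Measurable (fun p : 𝒳 × 𝒴 => L (φ (g p.1), p.2)) :=
      hL.comp (((hφ.comp hg).comp measurable_fst).prodMk measurable_snd)
    have hf : Measurable (fun q : W × U => L (φ q.1, m q)) :=
      hL.comp ((hφ.comp measurable_fst).prodMk hm)
    have lhs_eq : risk L (φ ∘ g) P
        = ∫⁻ q, L (φ q.1, m q) ∂((ν.map g).prod F) := by
      simp only [risk, Function.comp]
      rw [hκP, lintegral_map hLφ hcomp, ← hκg]
      exact (lintegral_map hf ((hg.comp measurable_fst).prodMk measurable_snd)).symm
    have rhs_eq : risk L h ((ν.prod F).map (fun p : 𝒳 × U => (p.1, m (g p.1, p.2))))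
        = ∫⁻ x, ∫⁻ u, L (h x, m (g x, u)) ∂F ∂ν := by
      rw [risk, lintegral_map hLh hcomp]
      exact lintegral_prod _
        ((hL.comp ((hh.comp measurable_fst).prodMk
          (hm.comp ((hg.comp measurable_fst).prodMk measurable_snd)))).aemeasurable)
    rw [lhs_eq, rhs_eq, lintegral_prod _ hf.aemeasurable,
      lintegral_map (f := fun w => ∫⁻ u, L (φ w, m (w, u)) ∂F)
        (Measurable.lintegral_prod_right (hL.comp
          ((hφ.comp measurable_fst).prodMk hm))) hg]
    exact lintegral_mono fun x => hmin (g x) (h x)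
end

section
/- (Theorem 1) Let φ : W → Z be a measurable pointwise conditional-risk minimizer and h_s := φ ∘ g. Then h_s is minimax optimal over 𝒫 among measurable models: for every measurable h : 𝒳 → Z, sup_{P ∈ 𝒫} E_P[L(h_s(X), Y)] ≤ sup_{P ∈ 𝒫} E_P[L(h(X), Y)]. -/
open MeasureTheory ENNReal

variable {𝒳 W U 𝒴 Z : Type*} [MeasurableSpace 𝒳] [MeasurableSpace W]
  [MeasurableSpace U] [MeasurableSpace 𝒴] [MeasurableSpace Z]

/-- Theorem 1: if `φ` is a measurable pointwise conditional-risk minimizer and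
`h_s = φ ∘ g`, then `h_s` is minimax optimal over `𝒫` among measurable models:
`sup_{P ∈ 𝒫} E_P[L(h_s(X), Y)] ≤ sup_{P ∈ 𝒫} E_P[L(h(X), Y)]` for every measurable `h`. -/
theorem stmt_7 (g : 𝒳 → W) (hg : Measurable g) (m : W × U → 𝒴) (hm : Measurable m)
    (F : Measure U) [IsProbabilityMeasure F] (L : Z × 𝒴 → ℝ≥0∞) (hL : Measurable L)
    (φ : W → Z) (hφ : Measurable φ) (hmin : IsPointwiseCondRiskMin L m F φ)
    (h : 𝒳 → Z) (hh : Measurable h) :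
    (⨆ (P : Measure (𝒳 × 𝒴)) (_ : MemP g m F P), risk L (φ ∘ g) P) ≤
      ⨆ (P : Measure (𝒳 × 𝒴)) (_ : MemP g m F P), risk L h P := by
  refine iSup₂_le fun P hP => ?_
  obtain ⟨κ, hκprob, hpush, hPdef⟩ := hP
  haveI := hκprob
  set ν : Measure 𝒳 := κ.map Prod.fst with hν
  haveI : IsProbabilityMeasure ν := Measure.isProbabilityMeasure_map measurable_fst.aemeasurable
  set κ' : Measure (𝒳 × U) := ν.prod F with hκ'
  set P' : Measure (𝒳 × 𝒴) := κ'.map (fun p : 𝒳 × U => (p.1, m (g p.1, p.2))) with hP'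
  have hT : Measurable (fun p : 𝒳 × U => (p.1, m (g p.1, p.2))) :=
    measurable_fst.prodMk (hm.comp ((hg.comp measurable_fst).prodMk measurable_snd))
  have hgid : Measurable (fun p : 𝒳 × U => (g p.1, p.2)) :=
    (hg.comp measurable_fst).prodMk measurable_snd
  have hfun : (fun p : 𝒳 × U => (g p.1, p.2)) = Prod.map g id := rfl
  have hκ'push : κ'.map (fun p : 𝒳 × U => (g p.1, p.2)) = (ν.map g).prod F := by
    rw [hκ', hfun, ← Measure.map_prod_map (f := g) (g := id) ν F hg measurable_id,
      Measure.map_id]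
  have hmemP' : MemP g m F P' := by
    refine ⟨κ', ⟨inferInstance, ?_, rfl⟩⟩
    rw [hκ'push]
    congr 1
    rw [hκ', Measure.map_fst_prod]
    simp
  have hLφ : Measurable (fun p : 𝒳 × 𝒴 => L ((φ ∘ g) p.1, p.2)) :=
    hL.comp ((hφ.comp (hg.comp measurable_fst)).prodMk measurable_snd)
  have hLh : Measurable (fun p : 𝒳 × 𝒴 => L (h p.1, p.2)) :=
    hL.comp ((hh.comp measurable_fst).prodMk measurable_snd)
  have lφ : ∀ ρ : Measure (𝒳 × U),
      risk L (φ ∘ g) (ρ.map (fun p : 𝒳 × U => (p.1, m (g p.1, p.2))))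
        = ∫⁻ p : 𝒳 × U, L (φ (g p.1), m (g p.1, p.2)) ∂ρ := fun ρ =>
    lintegral_map (f := fun p : 𝒳 × 𝒴 => L ((φ ∘ g) p.1, p.2)) hLφ hT
  have lh : ∀ ρ : Measure (𝒳 × U),
      risk L h (ρ.map (fun p : 𝒳 × U => (p.1, m (g p.1, p.2))))
        = ∫⁻ p : 𝒳 × U, L (h p.1, m (g p.1, p.2)) ∂ρ := fun ρ =>
    lintegral_map (f := fun p : 𝒳 × 𝒴 => L (h p.1, p.2)) hLh hT
  have e1 : ∀ (ρ : Measure (𝒳 × U)),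
      ρ.map (fun p : 𝒳 × U => (g p.1, p.2)) = (ν.map g).prod F →
      ∫⁻ p : 𝒳 × U, L (φ (g p.1), m (g p.1, p.2)) ∂ρ
        = ∫⁻ q : W × U, L (φ q.1, m q) ∂((ν.map g).prod F) := by
    intro ρ hρ
    rw [← hρ, lintegral_map (f := fun q : W × U => L (φ q.1, m q))
      (hL.comp ((hφ.comp measurable_fst).prodMk hm)) hgid]
  have key : risk L (φ ∘ g) P = risk L (φ ∘ g) P' := by
    rw [hPdef, hP', lφ κ, lφ κ', e1 κ hpush, e1 κ' hκ'push]
  rw [key]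
  refine le_trans ?_ (le_iSup₂ P' hmemP')
  rw [hP', lφ κ', lh κ', hκ',
    lintegral_prod (f := fun p : 𝒳 × U => L (φ (g p.1), m (g p.1, p.2)))
      ((hL.comp ((hφ.comp (hg.comp measurable_fst)).prodMk
        (hm.comp hgid))).aemeasurable),
    lintegral_prod (f := fun p : 𝒳 × U => L (h p.1, m (g p.1, p.2)))
      ((hL.comp ((hh.comp measurable_fst).prodMk
        (hm.comp hgid))).aemeasurable)]
  exact lintegral_mono fun x => hmin (g x) (h x)
end

section
/- Suppose there exists a measurable selection a : W → 𝒳 for g, let P_s ∈ 𝒫, let φ : W → Z be a measurable pointwise conditional-risk minimizer, and set h_s := φ ∘ g. Then for every measurable model h : 𝒳 → Z there exists a measurable transformation T : 𝒳 → 𝒳 with g ∘ T = g such that E_{P_s}[L(h(T(X)), Y)] ≥ E_{P_s}[L(h_s(X), Y)]. -/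
open MeasureTheory ENNReal

variable {𝒳 W U 𝒴 Z : Type*} [MeasurableSpace 𝒳] [MeasurableSpace W]
  [MeasurableSpace U] [MeasurableSpace 𝒴] [MeasurableSpace Z]

/-- Suppose there is a measurable selection `a` for `g`, let `P_s ∈ 𝒫`, let `φ` be a
measurable pointwise conditional-risk minimizer and `h_s = φ ∘ g`. Then for every
measurable model `h` there is a measurable causal invariant transformation `T`
(`g ∘ T = g`) with `E_{P_s}[L(h(T(X)), Y)] ≥ E_{P_s}[L(h_s(X), Y)]`. -/
theorem stmt_8 (g : 𝒳 → W) (hg : Measurable g) (m : W × U → 𝒴) (hm : Measurable m)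
    (F : Measure U) [IsProbabilityMeasure F] (L : Z × 𝒴 → ℝ≥0∞) (hL : Measurable L)
    (a : W → 𝒳) (ha : Measurable a) (hsel : ∀ x : 𝒳, g (a (g x)) = g x)
    (P_s : Measure (𝒳 × 𝒴)) (hPs : MemP g m F P_s)
    (φ : W → Z) (hφ : Measurable φ) (hmin : IsPointwiseCondRiskMin L m F φ)
    (h : 𝒳 → Z) (hh : Measurable h) :
    ∃ T : 𝒳 → 𝒳, Measurable T ∧ g ∘ T = g ∧
      risk L (φ ∘ g) P_s ≤ risk L (h ∘ T) P_s := by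
  obtain ⟨κ, hκprob, hκmap, hPeq⟩ := hPs
  refine ⟨a ∘ g, ha.comp hg, funext hsel, ?_⟩
  have hmeasψ : Measurable (fun p : 𝒳 × U => (g p.1, p.2)) :=
    (hg.comp measurable_fst).prodMk measurable_snd
  have hmeasP : Measurable (fun p : 𝒳 × U => (p.1, m (g p.1, p.2))) :=
    measurable_fst.prodMk (hm.comp hmeasψ)
  have key : ∀ (ψ : W → Z), Measurable ψ →
      risk L (ψ ∘ g) P_s = ∫⁻ w, ∫⁻ u, L (ψ w, m (w, u)) ∂F ∂((κ.map Prod.fst).map g) := by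
    intro ψ hψ
    have hf : Measurable (fun q : W × U => L (ψ q.1, m q)) :=
      hL.comp ((hψ.comp measurable_fst).prodMk hm)
    have h1 : Measurable (fun p : 𝒳 × 𝒴 => L ((ψ ∘ g) p.1, p.2)) :=
      hL.comp ((hψ.comp (hg.comp measurable_fst)).prodMk measurable_snd)
    rw [risk, hPeq, lintegral_map h1 hmeasP]
    have h2 := lintegral_map (μ := κ) hf hmeasψ
    rw [hκmap, lintegral_prod _ hf.aemeasurable] at h2
    exact h2.symm
  rw [key φ hφ, show h ∘ a ∘ g = (h ∘ a) ∘ g from rfl, key (h ∘ a) (hh.comp ha)]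
  exact lintegral_mono fun w => hmin w (h (a w))
end

section
/- (Theorem 2) Suppose there exists a measurable selection a : W → 𝒳 for g, let P_s ∈ 𝒫, let φ : W → Z be a measurable pointwise conditional-risk minimizer, and set h_s := φ ∘ g. Then h_s minimizes the worst-case transformed risk among measurable models: for every measurable h : 𝒳 → Z, sup_{T} E_{P_s}[L(h(T(X)), Y)] ≥ E_{P_s}[L(h_s(X), Y)] = sup_{T} E_{P_s}[L(h_s(T(X)), Y)], where both suprema range over all measurable transformations T : 𝒳 → 𝒳 with g ∘ T = g. -/
open MeasureTheory ENNReal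

variable {𝒳 W U 𝒴 Z : Type*} [MeasurableSpace 𝒳] [MeasurableSpace W]
  [MeasurableSpace U] [MeasurableSpace 𝒴] [MeasurableSpace Z]

lemma risk_comp_eq (g : 𝒳 → W) (hg : Measurable g) (m : W × U → 𝒴) (hm : Measurable m)
    (F : Measure U) [IsProbabilityMeasure F] (L : Z × 𝒴 → ℝ≥0∞) (hL : Measurable L)
    (κ : Measure (𝒳 × U)) (P : Measure (𝒳 × 𝒴)) (hκ : IsCouplingFor g m F κ P)
    (ψ : W → Z) (hψ : Measurable ψ) :
    risk L (ψ ∘ g) P = ∫⁻ w, ∫⁻ u, L (ψ w, m (w, u)) ∂F ∂((κ.map Prod.fst).map g) := by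
  obtain ⟨hprob, hmap, hP⟩ := hκ
  have hf : Measurable (fun p : 𝒳 × U => (p.1, m (g p.1, p.2))) :=
    measurable_fst.prodMk (hm.comp ((hg.comp measurable_fst).prodMk measurable_snd))
  have hfun : Measurable (fun r : W × U => L (ψ r.1, m r)) :=
    hL.comp ((hψ.comp measurable_fst).prodMk hm)
  have h1 : ∫⁻ p : 𝒳 × 𝒴, L ((ψ ∘ g) p.1, p.2) ∂(κ.map (fun p : 𝒳 × U => (p.1, m (g p.1, p.2))))
      = ∫⁻ p : 𝒳 × U, L (ψ (g p.1), m (g p.1, p.2)) ∂κ :=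
    lintegral_map (hL.comp ((hψ.comp (hg.comp measurable_fst)).prodMk measurable_snd)) hf
  rw [risk, hP, h1]
  have h2 : ∫⁻ p : 𝒳 × U, L (ψ (g p.1), m (g p.1, p.2)) ∂κ
      = ∫⁻ r : W × U, L (ψ r.1, m r) ∂(κ.map (fun p : 𝒳 × U => (g p.1, p.2))) :=
    (lintegral_map hfun ((hg.comp measurable_fst).prodMk measurable_snd)).symm
  rw [h2, hmap, lintegral_prod _ hfun.aemeasurable]

/-- Theorem 2: under a measurable selection for `g`, with `P_s ∈ 𝒫` and `h_s = φ ∘ g`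
for a measurable pointwise conditional-risk minimizer `φ`, `h_s` minimizes the worst-case
transformed risk over all measurable causal invariant transformations `T` (`g ∘ T = g`):
for every measurable `h`,
`sup_T E_{P_s}[L(h(T(X)), Y)] ≥ E_{P_s}[L(h_s(X), Y)] = sup_T E_{P_s}[L(h_s(T(X)), Y)]`. -/
theorem stmt_9 (g : 𝒳 → W) (hg : Measurable g) (m : W × U → 𝒴) (hm : Measurable m)
    (F : Measure U) [IsProbabilityMeasure F] (L : Z × 𝒴 → ℝ≥0∞) (hL : Measurable L)
    (a : W → 𝒳) (ha : Measurable a) (hsel : ∀ x : 𝒳, g (a (g x)) = g x)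
    (P_s : Measure (𝒳 × 𝒴)) (hPs : MemP g m F P_s)
    (φ : W → Z) (hφ : Measurable φ) (hmin : IsPointwiseCondRiskMin L m F φ)
    (h : 𝒳 → Z) (hh : Measurable h) :
    risk L (φ ∘ g) P_s ≤
        (⨆ (T : 𝒳 → 𝒳) (_ : Measurable T ∧ g ∘ T = g), risk L (h ∘ T) P_s) ∧
      risk L (φ ∘ g) P_s =
        ⨆ (T : 𝒳 → 𝒳) (_ : Measurable T ∧ g ∘ T = g), risk L ((φ ∘ g) ∘ T) P_s := by
  obtain ⟨κ, hκ⟩ := hPs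
  have hkey := risk_comp_eq g hg m hm F L hL κ P_s hκ φ hφ
  constructor
  · -- inequality: witness T = a ∘ g
    have hT : Measurable (a ∘ g) ∧ g ∘ (a ∘ g) = g :=
      ⟨(ha.comp hg), funext fun x => hsel x⟩
    have heq : h ∘ (a ∘ g) = (h ∘ a) ∘ g := rfl
    have hle : risk L (φ ∘ g) P_s ≤ risk L (h ∘ (a ∘ g)) P_s := by
      rw [hkey, heq, risk_comp_eq g hg m hm F L hL κ P_s hκ (h ∘ a) (hh.comp ha)]
      exact lintegral_mono fun w => hmin w (h (a w))
    exact hle.trans (le_iSup₂ (f := fun (T : 𝒳 → 𝒳) (_ : Measurable T ∧ g ∘ T = g) =>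
      risk L (h ∘ T) P_s) (a ∘ g) hT)
  · -- equality: each term equals risk L (φ ∘ g) P_s
    apply le_antisymm
    · exact le_iSup₂ (f := fun (T : 𝒳 → 𝒳) (_ : Measurable T ∧ g ∘ T = g) =>
        risk L ((φ ∘ g) ∘ T) P_s) id ⟨measurable_id, rfl⟩
    · refine iSup₂_le fun T hT => le_of_eq ?_
      have : (φ ∘ g) ∘ T = φ ∘ g := by
        funext x
        simp only [Function.comp_apply]
        rw [show g (T x) = g x from congrFun hT.2 x]
      rw [this]
end

section
/- (Theorem 3, optimality direction) Suppose there exists a measurable selection a : W → 𝒳 for g, let P_s ∈ 𝒫, let I be a causal essential set for g, let φ : W → Z be a measurable pointwise conditional-risk minimizer, and set h_s := φ ∘ g. Then h_s satisfies the invariance constraint h_s ∘ T = h_s for every T ∈ I, and for every measurable model h : 𝒳 → Z satisfying h ∘ T = h for all T ∈ I one has E_{P_s}[L(h(X), Y)] ≥ E_{P_s}[L(h_s(X), Y)]; that is, h_s minimizes the risk under P_s over all measurable models invariant to the causal essential set. -/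
/-!
An `I`-invariant model is constant along the chains of transformations in `I`, hence on the
fibres of `g`, so it factors as `ψ ∘ g` with `ψ := h ∘ a` measurable. For a model of the form
`ψ ∘ g`, independence of `g(X)` and `η` turns the risk into
`∫ (∫ L(ψ w, m(w, u)) dF(u)) d(g_*ν)(w)`, and there `φ` wins pointwise.
-/

open MeasureTheory ENNReal

variable {𝒳 W U 𝒴 Z : Type*} [MeasurableSpace 𝒳] [MeasurableSpace W]
  [MeasurableSpace U] [MeasurableSpace 𝒴] [MeasurableSpace Z]

theorem apply_foldr_comp_eq_of_forall_comp_eq {X V : Type*} {h : X → V} {I : Set (X → X)}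
    (hinv : ∀ T ∈ I, h ∘ T = h) :
    ∀ l : List (X → X), (∀ T ∈ l, T ∈ I) → ∀ x, h (l.foldr (· ∘ ·) id x) = h x
  | [], _, _ => rfl
  | T :: l, hl, x => by
    rw [List.foldr_cons, Function.comp_apply, ← Function.comp_apply (f := h),
      hinv T (hl T List.mem_cons_self),
      apply_foldr_comp_eq_of_forall_comp_eq hinv l (fun T hT => hl T (List.mem_cons_of_mem _ hT))]

namespace IsCausalEssentialSet

variable {X V V' : Type*} {g : X → V} {I : Set (X → X)}

theorem apply_eq_of_apply_eq (hI : IsCausalEssentialSet g I) {h : X → V'}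
    (hinv : ∀ T ∈ I, h ∘ T = h) {x₁ x₂ : X} (hx : g x₁ = g x₂) : h x₁ = h x₂ := by
  obtain ⟨l, hlI, rfl⟩ := hI.2 x₁ x₂ hx
  exact (apply_foldr_comp_eq_of_forall_comp_eq hinv l hlI x₁).symm

theorem comp_selection_comp_eq (hI : IsCausalEssentialSet g I) {a : V → X}
    (hsel : ∀ x, g (a (g x)) = g x) {h : X → V'} (hinv : ∀ T ∈ I, h ∘ T = h) :
    h ∘ a ∘ g = h :=
  funext fun x => hI.apply_eq_of_apply_eq hinv (hsel x)

theorem comp_comp_eq (hI : IsCausalEssentialSet g I) (ψ : V → V') {T : X → X} (hT : T ∈ I) :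
    (ψ ∘ g) ∘ T = ψ ∘ g := by
  rw [Function.comp_assoc, hI.1 T hT]

end IsCausalEssentialSet

namespace IsCouplingFor

variable {g : 𝒳 → W} {m : W × U → 𝒴} {F : Measure U} {κ : Measure (𝒳 × U)}
  {P : Measure (𝒳 × 𝒴)} {L : Z × 𝒴 → ℝ≥0∞}

theorem risk_comp_eq_lintegral [SFinite F] (hκ : IsCouplingFor g m F κ P) (hg : Measurable g)
    (hm : Measurable m) (hL : Measurable L) {ψ : W → Z} (hψ : Measurable ψ) :
    risk L (ψ ∘ g) P = ∫⁻ w, ∫⁻ u, L (ψ w, m (w, u)) ∂F ∂((κ.map Prod.fst).map g) := by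
  obtain ⟨-, hindep, rfl⟩ := hκ
  have hgU : Measurable fun p : 𝒳 × U => (g p.1, p.2) :=
    (hg.comp measurable_fst).prodMk measurable_snd
  have hloss : Measurable fun q : W × U => L (ψ q.1, m q) :=
    hL.comp ((hψ.comp measurable_fst).prodMk hm)
  calc risk L (ψ ∘ g) (κ.map fun p : 𝒳 × U => (p.1, m (g p.1, p.2)))
      = ∫⁻ p : 𝒳 × U, L (ψ (g p.1), m (g p.1, p.2)) ∂κ :=
        lintegral_map (hL.comp ((hψ.comp (hg.comp measurable_fst)).prodMk measurable_snd))
          (measurable_fst.prodMk (hm.comp hgU))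
    _ = ∫⁻ q : W × U, L (ψ q.1, m q) ∂(κ.map fun p : 𝒳 × U => (g p.1, p.2)) :=
        (lintegral_map hloss hgU).symm
    _ = ∫⁻ w, ∫⁻ u, L (ψ w, m (w, u)) ∂F ∂((κ.map Prod.fst).map g) := by
        rw [hindep, lintegral_prod _ hloss.aemeasurable]

theorem risk_comp_le [SFinite F] (hκ : IsCouplingFor g m F κ P) (hg : Measurable g)
    (hm : Measurable m) (hL : Measurable L) {φ ψ : W → Z} (hφ : Measurable φ)
    (hψ : Measurable ψ) (hmin : IsPointwiseCondRiskMin L m F φ) :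
    risk L (φ ∘ g) P ≤ risk L (ψ ∘ g) P := by
  rw [hκ.risk_comp_eq_lintegral hg hm hL hφ, hκ.risk_comp_eq_lintegral hg hm hL hψ]
  exact lintegral_mono fun w => hmin w (ψ w)

end IsCouplingFor

/-- Theorem 3, optimality direction: under a measurable selection for `g`, `P_s ∈ 𝒫`, a
causal essential set `I` for `g`, and `h_s = φ ∘ g` for a measurable pointwise
conditional-risk minimizer `φ`, the model `h_s` is invariant to every `T ∈ I` and
minimizes the risk under `P_s` over all measurable models invariant to `I`. -/
theorem stmt_10 (g : 𝒳 → W) (hg : Measurable g) (m : W × U → 𝒴) (hm : Measurable m)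
    (F : Measure U) [IsProbabilityMeasure F] (L : Z × 𝒴 → ℝ≥0∞) (hL : Measurable L)
    (a : W → 𝒳) (ha : Measurable a) (hsel : ∀ x : 𝒳, g (a (g x)) = g x)
    (P_s : Measure (𝒳 × 𝒴)) (hPs : MemP g m F P_s)
    (I : Set (𝒳 → 𝒳)) (hI : IsCausalEssentialSet g I)
    (φ : W → Z) (hφ : Measurable φ) (hmin : IsPointwiseCondRiskMin L m F φ) :
    (∀ T ∈ I, (φ ∘ g) ∘ T = φ ∘ g) ∧
      ∀ h : 𝒳 → Z, Measurable h → (∀ T ∈ I, h ∘ T = h) →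
        risk L (φ ∘ g) P_s ≤ risk L h P_s := by
  refine ⟨fun T hT => hI.comp_comp_eq φ hT, fun h hh hinv => ?_⟩
  obtain ⟨κ, hκ⟩ := hPs
  rw [← hI.comp_selection_comp_eq hsel hinv]
  exact hκ.risk_comp_le hg hm hL hφ (hh.comp ha) hmin
end

section
/- (Theorem 3, converse direction) Suppose there exists a measurable selection a : W → 𝒳 for g, let P_s ∈ 𝒫 with coupling κ_s whose first marginal is ν_s, set ν_g := g_*ν_s, let I be a causal essential set for g, let φ : W → Z be a measurable pointwise conditional-risk minimizer with h_s := φ ∘ g, and assume E_{P_s}[L(h_s(X), Y)] < ∞. If a measurable model h* : 𝒳 → Z satisfies h* ∘ T = h* for all T ∈ I and E_{P_s}[L(h*(X), Y)] ≤ E_{P_s}[L(h_s(X), Y)], then there exists a measurable map v : W → Z such that h* = v ∘ g and, for ν_g-almost every w ∈ W, ∫⁻_U L(v(w), m(w, u)) dF(u) ≤ ∫⁻_U L(z, m(w, u)) dF(u) for every z ∈ Z; that is, every constrained risk minimizer factors through g via an almost-everywhere pointwise conditional-risk minimizer. -/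
open MeasureTheory ENNReal

/-! An `I`-invariant model is constant on the fibres of `g`, because any two points of a
fibre are joined by a finite chain of maps from `I`; the selection `a` then writes it as
`v ∘ g` with `v = h* ∘ a`. Since `P_s` is the law of `(X, m(g X, η))` with `η ∼ F`
independent of `g X`, the risk of any `ψ ∘ g` is `∫ (∫ L(ψ w, m(w, u)) dF(u)) dν_g(w)`.
The integrand for `v` dominates the one for `φ` pointwise, while its integral is at most
the finite integral for `φ`; so the two integrands agree `ν_g`-a.e., and `v` inherits the
minimality of `φ` almost everywhere. -/

variable {𝒳 W U 𝒴 Z : Type*} [MeasurableSpace 𝒳] [MeasurableSpace W]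
  [MeasurableSpace U] [MeasurableSpace 𝒴] [MeasurableSpace Z]

theorem apply_foldr_comp_of_forall_comp_eq {X V : Type*} {f : X → V} {l : List (X → X)}
    (hl : ∀ T ∈ l, f ∘ T = f) (x : X) : f (l.foldr (· ∘ ·) id x) = f x := by
  induction l with
  | nil => rfl
  | cons T l ih =>
    exact (congrFun (hl T List.mem_cons_self) _).trans
      (ih fun T' hT' => hl T' (List.mem_cons_of_mem _ hT'))

namespace IsCausalEssentialSet

variable {X V V' : Type*} {g : X → V} {I : Set (X → X)}

theorem apply_eq_of_invariant (hI : IsCausalEssentialSet g I) {f : X → V'}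
    (hf : ∀ T ∈ I, f ∘ T = f) {x₁ x₂ : X} (h : g x₁ = g x₂) : f x₁ = f x₂ := by
  obtain ⟨l, hlI, rfl⟩ := hI.2 x₁ x₂ h
  exact (apply_foldr_comp_of_forall_comp_eq (fun T hT => hf T (hlI T hT)) x₁).symm

theorem eq_comp_of_invariant (hI : IsCausalEssentialSet g I) {f : X → V'}
    (hf : ∀ T ∈ I, f ∘ T = f) {a : V → X} (hsel : ∀ x, g (a (g x)) = g x) :
    f = (f ∘ a) ∘ g :=
  funext fun x => hI.apply_eq_of_invariant hf (hsel x).symm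

end IsCausalEssentialSet

noncomputable def condRisk (L : Z × 𝒴 → ℝ≥0∞) (m : W × U → 𝒴) (F : Measure U)
    (w : W) (z : Z) : ℝ≥0∞ :=
  ∫⁻ u, L (z, m (w, u)) ∂F

theorem measurable_condRisk_comp {L : Z × 𝒴 → ℝ≥0∞} {m : W × U → 𝒴} {F : Measure U}
    [SFinite F] (hL : Measurable L) (hm : Measurable m) {ψ : W → Z} (hψ : Measurable ψ) :
    Measurable fun w => condRisk L m F w (ψ w) :=
  (hL.comp ((hψ.comp measurable_fst).prodMk hm)).lintegral_prod_right'

theorem IsCouplingFor.risk_comp_eq_lintegral_condRisk {g : 𝒳 → W} {m : W × U → 𝒴}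
    {F : Measure U} [SFinite F] {κ : Measure (𝒳 × U)} {P : Measure (𝒳 × 𝒴)}
    (hP : IsCouplingFor g m F κ P) (hg : Measurable g) (hm : Measurable m)
    {L : Z × 𝒴 → ℝ≥0∞} (hL : Measurable L) {ψ : W → Z} (hψ : Measurable ψ) :
    risk L (ψ ∘ g) P = ∫⁻ w, condRisk L m F w (ψ w) ∂((κ.map Prod.fst).map g) := by
  obtain ⟨-, hindep, rfl⟩ := hP
  have hgu : Measurable fun p : 𝒳 × U => (g p.1, p.2) :=
    (hg.comp measurable_fst).prodMk measurable_snd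
  have hloss : Measurable fun q : W × U => L (ψ q.1, m q) :=
    hL.comp ((hψ.comp measurable_fst).prodMk hm)
  calc risk L (ψ ∘ g) (κ.map fun p => (p.1, m (g p.1, p.2)))
      = ∫⁻ p, L (ψ (g p.1), m (g p.1, p.2)) ∂κ :=
        lintegral_map (hL.comp (((hψ.comp hg).comp measurable_fst).prodMk measurable_snd))
          (measurable_fst.prodMk (hm.comp hgu))
    _ = ∫⁻ q, L (ψ q.1, m q) ∂(κ.map fun p => (g p.1, p.2)) := (lintegral_map hloss hgu).symm
    _ = ∫⁻ w, condRisk L m F w (ψ w) ∂((κ.map Prod.fst).map g) := by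
        rw [hindep, lintegral_prod _ hloss.aemeasurable]; rfl

theorem ae_forall_le_of_lintegral_le_of_forall_le {α β : Type*} [MeasurableSpace α]
    {μ : Measure α} {c : α → β → ℝ≥0∞} {φ v : α → β} (hφ : ∀ w z, c w (φ w) ≤ c w z)
    (hv : Measurable fun w => c w (v w)) (hfin : ∫⁻ w, c w (φ w) ∂μ ≠ ∞)
    (hle : ∫⁻ w, c w (v w) ∂μ ≤ ∫⁻ w, c w (φ w) ∂μ) :
    ∀ᵐ w ∂μ, ∀ z, c w (v w) ≤ c w z := by
  have hae : (fun w => c w (φ w)) =ᵐ[μ] fun w => c w (v w) :=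
    ae_eq_of_ae_le_of_lintegral_le (.of_forall fun w => hφ w (v w)) hfin hv.aemeasurable hle
  filter_upwards [hae] with w hw z
  exact hw ▸ hφ w z

/-- Theorem 3, converse direction: under a measurable selection for `g`, `P_s ∈ 𝒫` with
coupling `κ_s` (first marginal `ν_s`, causal-feature law `ν_g = g_*ν_s`), a causal
essential set `I` for `g`, and `h_s = φ ∘ g` with finite risk for a measurable pointwise
conditional-risk minimizer `φ`: every measurable model `h*` that is invariant to `I` and
whose risk under `P_s` does not exceed that of `h_s` factors through `g` as `h* = v ∘ g`
for a measurable `v` which, for `ν_g`-almost every `w`, minimizes the conditional risk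
`z ↦ ∫⁻ L(z, m (w, u)) dF` over all `z`. -/
theorem stmt_11 (g : 𝒳 → W) (hg : Measurable g) (m : W × U → 𝒴) (hm : Measurable m)
    (F : Measure U) [IsProbabilityMeasure F] (L : Z × 𝒴 → ℝ≥0∞) (hL : Measurable L)
    (a : W → 𝒳) (ha : Measurable a) (hsel : ∀ x : 𝒳, g (a (g x)) = g x)
    (P_s : Measure (𝒳 × 𝒴)) (κ_s : Measure (𝒳 × U)) (hPs : IsCouplingFor g m F κ_s P_s)
    (I : Set (𝒳 → 𝒳)) (hI : IsCausalEssentialSet g I)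
    (φ : W → Z) (hφ : Measurable φ) (hmin : IsPointwiseCondRiskMin L m F φ)
    (hfin : risk L (φ ∘ g) P_s < ⊤)
    (hstar : 𝒳 → Z) (hms : Measurable hstar) (hinv : ∀ T ∈ I, hstar ∘ T = hstar)
    (hopt : risk L hstar P_s ≤ risk L (φ ∘ g) P_s) :
    ∃ v : W → Z, Measurable v ∧ hstar = v ∘ g ∧
      ∀ᵐ w ∂((κ_s.map Prod.fst).map g),
        ∀ z : Z, ∫⁻ u, L (v w, m (w, u)) ∂F ≤ ∫⁻ u, L (z, m (w, u)) ∂F := by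
  have hv : Measurable (hstar ∘ a) := hms.comp ha
  have hfactor : hstar = (hstar ∘ a) ∘ g := hI.eq_comp_of_invariant hinv hsel
  refine ⟨hstar ∘ a, hv, hfactor, ?_⟩
  have hrisk {ψ : W → Z} (hψ : Measurable ψ) :=
    hPs.risk_comp_eq_lintegral_condRisk hg hm hL hψ
  rw [hfactor, hrisk hv, hrisk hφ] at hopt
  rw [hrisk hφ] at hfin
  exact ae_forall_le_of_lintegral_le_of_forall_le hmin (measurable_condRisk_comp hL hm hv)
    hfin.ne hopt
end

section
/- Let P ∈ 𝒫 with coupling κ, and let T : 𝒳 → 𝒳 be a measurable transformation satisfying g ∘ T = g (a causal invariant transformation). Then the law of (T(X), Y), namely the pushforward of κ under (x, u) ↦ (T(x), m(g(x), u)), also belongs to 𝒫; that is, applying a measurable causal invariant transformation to the inputs of a distribution in 𝒫 yields a distribution in 𝒫 (so the augmented class 𝒫_aug is a subset of 𝒫). -/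
open MeasureTheory ENNReal

variable {𝒳 W U 𝒴 Z : Type*} [MeasurableSpace 𝒳] [MeasurableSpace W]
  [MeasurableSpace U] [MeasurableSpace 𝒴] [MeasurableSpace Z]

/-- Applying a measurable causal invariant transformation `T` (`g ∘ T = g`) to the inputs
of a distribution `P ∈ 𝒫` with coupling `κ` yields the law of `(T(X), Y)`, namely the
pushforward of `κ` under `(x, u) ↦ (T x, m (g x, u))`, which again belongs to `𝒫`
(so the augmented class `𝒫_aug` is a subset of `𝒫`). -/
theorem stmt_12 (g : 𝒳 → W) (hg : Measurable g) (m : W × U → 𝒴) (hm : Measurable m)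
    (F : Measure U) [IsProbabilityMeasure F]
    (P : Measure (𝒳 × 𝒴)) (κ : Measure (𝒳 × U)) (hκ : IsCouplingFor g m F κ P)
    (T : 𝒳 → 𝒳) (hT : Measurable T) (hTg : g ∘ T = g) :
    MemP g m F (κ.map (fun p : 𝒳 × U => (T p.1, m (g p.1, p.2)))) := by
  obtain ⟨hκprob, hκ2, hκ3⟩ := hκ
  have hgT : ∀ x, g (T x) = g x := fun x => congrFun hTg x
  have hmT : Measurable fun p : 𝒳 × U => (T p.1, p.2) := by fun_prop
  have hmg : Measurable fun p : 𝒳 × U => (g p.1, p.2) := by fun_prop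
  have hmm : Measurable fun p : 𝒳 × U => (p.1, m (g p.1, p.2)) := by fun_prop
  refine ⟨κ.map (fun p : 𝒳 × U => (T p.1, p.2)), ?_, ?_, ?_⟩
  · exact Measure.isProbabilityMeasure_map hmT.aemeasurable
  · rw [Measure.map_map hmg hmT, Measure.map_map measurable_fst hmT]
    have h1 : ((fun p : 𝒳 × U => (g p.1, p.2)) ∘ fun p : 𝒳 × U => (T p.1, p.2)) =
        fun p : 𝒳 × U => (g p.1, p.2) := by
      funext p; simp [hgT]
    have h2 : (Prod.fst ∘ fun p : 𝒳 × U => (T p.1, p.2)) = T ∘ (Prod.fst : 𝒳 × U → 𝒳) := rfl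
    rw [h1, h2, hκ2, ← Measure.map_map hT measurable_fst]
    congr 1
    rw [Measure.map_map hg hT, hTg]
  · rw [Measure.map_map hmm hmT]
    congr 1
    funext p
    simp [hgT]
end
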